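/- arXiv:1809.02902 — 3 statements merged into one kernel-verified Lean document; each statement's English description precedes it below -/
import Mathlib

section
/- Let n ≥ 2 and let w₁ ≥ w₂ ≥ ... ≥ wₙ be real numbers with (w₁, ..., wₙ) ∈ Γ₂. Write σ₁ = Σᵢ wᵢ and σ₂ = Σ_{i<j} wᵢwⱼ. Let ξ₁, ..., ξₙ and η be real numbers satisfying Σᵢ (σ₁ − wᵢ) ξᵢ = η. Then −Σ_{i≠j} ξᵢ ξⱼ ≥ ((n−1)/(2σ₂)) · (2σ₂ ξ₁ − w₁ η)² / ((n−1)w₁² + 2(n−2)σ₂) − η²/(2σ₂). -/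
/-!
Split off the first coordinate, `ξ = (ξ₀, y)`, and let `u = (1, …, 1)` and `v = (σ₁ - wᵢ)_{i ≥ 1}`
be the corresponding tails. Then `-∑_{i ≠ j} ξᵢ ξⱼ = ‖y‖² + ξ₀² - (ξ₀ + ⟪u, y⟫)²`, while the
constraint prescribes `⟪v, y⟫ = η - (σ₁ - w₀) ξ₀`. The minimum of this quadratic function of `y`
is governed by the Gram matrix of `u, v, y`: completing the square in `⟪u, y⟫` and using that the
Gram determinant of `u, v, y` is nonnegative gives the bound (when `u ∥ v`, Cauchy–Schwarz for
`v, y` takes its place). The Gram entries of `u, v` are polynomials in `σ₁, σ₂, w₀` because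
`∑ wᵢ² = σ₁² - 2σ₂`, and substituting them yields the stated bound. Its denominator
`(n - 1) w₀² + 2 (n - 2) σ₂` is positive since `w₀` is the largest entry of `w` and `σ₁ > 0`.
-/

open scoped BigOperators

noncomputable section

/-- The `k`-th elementary symmetric polynomial of `w ∈ ℝⁿ`. -/
def esymm (n k : ℕ) (w : Fin n → ℝ) : ℝ :=
  ∑ s ∈ Finset.powersetCard k Finset.univ, ∏ i ∈ s, w i

open scoped RealInnerProductSpace

section
variable {E : Type*} [NormedAddCommGroup E] [InnerProductSpace ℝ E]

theorem gram_det_nonneg (u v : E) : 0 ≤ ‖u‖ ^ 2 * ‖v‖ ^ 2 - ⟪u, v⟫ ^ 2 := by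
  have := real_inner_mul_inner_self_le u v
  rw [real_inner_self_eq_norm_sq, real_inner_self_eq_norm_sq] at this
  linarith

theorem norm_inner_smul_sub_inner_smul_sq (u v y : E) :
    ‖⟪u, y⟫ • v - ⟪v, y⟫ • u‖ ^ 2 =
      ‖v‖ ^ 2 * ⟪u, y⟫ ^ 2 - 2 * ⟪u, v⟫ * ⟪u, y⟫ * ⟪v, y⟫ + ‖u‖ ^ 2 * ⟪v, y⟫ ^ 2 := by
  rw [norm_sub_sq_real, norm_smul, norm_smul, real_inner_smul_left, real_inner_smul_right,
    real_inner_comm u v, mul_pow, mul_pow, Real.norm_eq_abs, Real.norm_eq_abs, sq_abs, sq_abs]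
  ring

/-- The Gram determinant of `u, v, y` is nonnegative. -/
theorem norm_inner_smul_sub_inner_smul_sq_le (u v y : E) :
    ‖⟪u, y⟫ • v - ⟪v, y⟫ • u‖ ^ 2 ≤ (‖u‖ ^ 2 * ‖v‖ ^ 2 - ⟪u, v⟫ ^ 2) * ‖y‖ ^ 2 := by
  set w := ⟪u, y⟫ • v - ⟪v, y⟫ • u
  set z := ⟪v, w⟫ • u - ⟪u, w⟫ • v
  have hzy : ⟪z, y⟫ = ‖w‖ ^ 2 := by
    rw [← real_inner_self_eq_norm_sq]
    simp only [z, w, inner_sub_left, inner_sub_right, real_inner_smul_left, real_inner_smul_right]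
    ring
  have hz : ‖z‖ ^ 2 = (‖u‖ ^ 2 * ‖v‖ ^ 2 - ⟪u, v⟫ ^ 2) * ‖w‖ ^ 2 := by
    rw [norm_inner_smul_sub_inner_smul_sq, norm_inner_smul_sub_inner_smul_sq]
    simp only [w, inner_sub_right, real_inner_smul_right, real_inner_self_eq_norm_sq,
      real_inner_comm u v]
    ring
  have hCS := real_inner_mul_inner_self_le z y
  rw [hzy, real_inner_self_eq_norm_sq, real_inner_self_eq_norm_sq, hz] at hCS
  rcases (sq_nonneg ‖w‖).eq_or_lt with hw | hw
  · rw [← hw]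
    exact mul_nonneg (gram_det_nonneg u v) (sq_nonneg _)
  · exact le_of_mul_le_mul_left (hCS.trans_eq (by ring)) hw

theorem neg_div_le_norm_sq_add_sq_sub_sq (u v y : E) (x : ℝ)
    (hD : 0 < ⟪u, v⟫ ^ 2 - (‖u‖ ^ 2 - 1) * ‖v‖ ^ 2) :
    -((‖u‖ ^ 2 - 1) * ⟪v, y⟫ ^ 2 + 2 * ⟪u, v⟫ * ⟪v, y⟫ * x
        + (‖u‖ ^ 2 * ‖v‖ ^ 2 - ⟪u, v⟫ ^ 2) * x ^ 2) / (⟪u, v⟫ ^ 2 - (‖u‖ ^ 2 - 1) * ‖v‖ ^ 2)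
      ≤ ‖y‖ ^ 2 + x ^ 2 - (x + ⟪u, y⟫) ^ 2 := by
  have hGram := norm_inner_smul_sub_inner_smul_sq_le u v y
  have hR := sq_nonneg ‖⟪u, y⟫ • v - ⟪v, y⟫ • u‖
  rw [norm_inner_smul_sub_inner_smul_sq] at hGram hR
  have hCS := real_inner_mul_inner_self_le v y
  rw [real_inner_self_eq_norm_sq, real_inner_self_eq_norm_sq] at hCS
  have hdet := gram_det_nonneg u v
  generalize ‖u‖ ^ 2 = m, ‖v‖ ^ 2 = B, ‖y‖ ^ 2 = q, ⟪u, v⟫ = A, ⟪u, y⟫ = s, ⟪v, y⟫ = t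
    at hD hGram hR hCS hdet ⊢
  rw [div_le_iff₀ hD, neg_le_iff_add_nonneg']
  rcases hdet.eq_or_lt with hdet | hdet
  · -- `u ∥ v`, which forces `‖v‖² ⟪u, y⟫ = ⟪u, v⟫ ⟪v, y⟫`
    have hB : 0 < B := by linarith
    have hR0 : B * s ^ 2 - 2 * A * s * t + m * t ^ 2 = 0 :=
      le_antisymm (hGram.trans_eq (by rw [← hdet, zero_mul])) hR
    have hst : B * s - A * t = 0 := by
      apply pow_eq_zero_iff two_ne_zero |>.1
      linear_combination B * hR0 + t ^ 2 * hdet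
    have key : B * ((m - 1) * t ^ 2 + 2 * A * t * x + (m * B - A ^ 2) * x ^ 2
        + (q + x ^ 2 - (x + s) ^ 2) * (A ^ 2 - (m - 1) * B)) = B * (B * q - t * t) := by
      linear_combination -(B * s + A * t + 2 * B * x) * hst
        - (t ^ 2 + B * (x ^ 2 - q + 2 * x * s + s ^ 2)) * hdet
    refine nonneg_of_mul_nonneg_right ?_ hB
    rw [key]
    exact mul_nonneg hB.le (sub_nonneg.2 hCS)
  · have key : (m * B - A ^ 2) * ((m - 1) * t ^ 2 + 2 * A * t * x + (m * B - A ^ 2) * x ^ 2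
        + (q + x ^ 2 - (x + s) ^ 2) * (A ^ 2 - (m - 1) * B))
        = (A ^ 2 - (m - 1) * B) * ((m * B - A ^ 2) * q - (B * s ^ 2 - 2 * A * s * t + m * t ^ 2))
          + ((A ^ 2 - (m - 1) * B) * s - A * t - (m * B - A ^ 2) * x) ^ 2 := by ring
    refine nonneg_of_mul_nonneg_right ?_ hdet
    rw [key]
    exact add_nonneg (mul_nonneg hD.le (sub_nonneg.2 hGram)) (sq_nonneg _)

end

open Finset

theorem esymm_eq_eval (n k : ℕ) (w : Fin n → ℝ) :
    esymm n k w = MvPolynomial.eval w (MvPolynomial.esymm (Fin n) ℝ k) := by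
  simp [esymm, MvPolynomial.esymm]

theorem esymm_one (n : ℕ) (w : Fin n → ℝ) : esymm n 1 w = ∑ i, w i := by
  simp [esymm, powersetCard_one]

theorem two_mul_esymm_two (n : ℕ) (w : Fin n → ℝ) :
    2 * esymm n 2 w = (∑ i, w i) ^ 2 - ∑ i, w i ^ 2 := by
  have newton := congrArg (MvPolynomial.eval w) (MvPolynomial.mul_esymm_eq_sum (Fin n) ℝ 2)
  rw [show (antidiagonal 2).filter (fun a => a.1 < 2) = {(0, 2), (1, 1)} by decide] at newton
  rw [sum_pair (by decide), MvPolynomial.esymm_zero, MvPolynomial.esymm_one] at newton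
  simp only [MvPolynomial.psum, map_mul, map_add, map_neg, map_pow, map_one, map_sum, map_natCast,
    MvPolynomial.eval_X, pow_one] at newton
  rw [esymm_eq_eval]
  linear_combination newton

theorem sum_esymm_one_sub (n : ℕ) (w : Fin n → ℝ) :
    ∑ i, (esymm n 1 w - w i) = (n - 1) * esymm n 1 w := by
  rw [sum_sub_distrib, sum_const, card_univ, Fintype.card_fin, nsmul_eq_mul, ← esymm_one]
  ring

theorem sum_esymm_one_sub_sq (n : ℕ) (w : Fin n → ℝ) :
    ∑ i, (esymm n 1 w - w i) ^ 2 = (n - 1) * esymm n 1 w ^ 2 - 2 * esymm n 2 w := by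
  simp only [sub_sq, sum_add_distrib, sum_sub_distrib, sum_const, card_univ, Fintype.card_fin,
    nsmul_eq_mul, ← mul_sum, two_mul_esymm_two, ← esymm_one]
  ring

theorem sum_sum_ite_eq_sq_sum_sub_sum_sq {ι : Type*} [Fintype ι] [DecidableEq ι] (f : ι → ℝ) :
    ∑ i, ∑ j, (if i = j then 0 else f i * f j) = (∑ i, f i) ^ 2 - ∑ i, f i ^ 2 := by
  rw [sq, sum_mul_sum, ← sum_sub_distrib]
  refine sum_congr rfl fun i _ => ?_
  rw [sum_ite, sum_const_zero, zero_add, filter_ne, sum_erase_eq_sub (mem_univ i), sq]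

def tail {k : ℕ} (f : Fin (k + 1) → ℝ) : EuclideanSpace ℝ (Fin k) :=
  WithLp.toLp 2 fun i => f i.succ

theorem inner_tail {k : ℕ} (f g : Fin (k + 1) → ℝ) :
    ⟪tail f, tail g⟫ = ∑ i, f i * g i - f 0 * g 0 := by
  rw [tail, tail, EuclideanSpace.inner_toLp_toLp, Fin.sum_univ_succ]
  simp [dotProduct, mul_comm]

theorem norm_tail_sq {k : ℕ} (f : Fin (k + 1) → ℝ) :
    ‖tail f‖ ^ 2 = ∑ i, f i ^ 2 - f 0 ^ 2 := by
  rw [← real_inner_self_eq_norm_sq, inner_tail]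
  simp only [sq]

theorem inner_tail_one {k : ℕ} (f : Fin (k + 1) → ℝ) : ⟪tail 1, tail f⟫ = ∑ i, f i - f 0 := by
  simp [inner_tail]

theorem norm_tail_one_sq {k : ℕ} : ‖tail (1 : Fin (k + 1) → ℝ)‖ ^ 2 = k := by
  simp [norm_tail_sq]

theorem apply_zero_pos_of_antitone {n : ℕ} [NeZero n] {w : Fin n → ℝ} (hw : Antitone w)
    (h : 0 < ∑ i, w i) : 0 < w 0 := by
  obtain ⟨i, -, hi⟩ := exists_lt_of_sum_lt (f := 0) (g := w) (s := univ) (by simpa using h)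
  exact hi.trans_le (hw (Fin.zero_le i))

/-- Key algebraic lemma: if `w ∈ Γ₂` is sorted decreasingly and
`∑ᵢ (σ₁(w) - wᵢ) ξᵢ = η` (i.e. `∑ᵢ σ₂^{ii} ξᵢ = η` for the diagonal matrix with
diagonal `w`), then
`-∑_{i≠j} ξᵢξⱼ ≥ ((n-1)/(2σ₂)) (2σ₂ξ₁ - w₁η)² / ((n-1)w₁² + 2(n-2)σ₂) - η²/(2σ₂)`. -/
theorem key_lemma_CQ (n : ℕ) (hn : 2 ≤ n) [NeZero n] (w ξ : Fin n → ℝ) (η : ℝ)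
    (hsort : ∀ i j : Fin n, i ≤ j → w j ≤ w i)
    (hG : 0 < esymm n 1 w ∧ 0 < esymm n 2 w)
    (hlin : ∑ i, (esymm n 1 w - w i) * ξ i = η) :
    -(∑ i, ∑ j, if i = j then 0 else ξ i * ξ j) ≥
      ((n:ℝ) - 1) / (2 * esymm n 2 w) *
        ((2 * esymm n 2 w * ξ 0 - w 0 * η) ^ 2 /
          (((n:ℝ) - 1) * (w 0) ^ 2 + 2 * ((n:ℝ) - 2) * esymm n 2 w)) -
      η ^ 2 / (2 * esymm n 2 w) := by
  obtain ⟨hσ₁, hσ₂⟩ := hG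
  obtain ⟨k, rfl⟩ : ∃ k, n = k + 1 := ⟨n - 1, by omega⟩
  have hk : (1 : ℝ) ≤ k := by exact_mod_cast (by omega : 1 ≤ k)
  have hw₀ : 0 < w 0 := apply_zero_pos_of_antitone hsort (esymm_one (k + 1) w ▸ hσ₁)
  have key := neg_div_le_norm_sq_add_sq_sub_sq
    (tail 1) (tail fun i => esymm (k + 1) 1 w - w i) (tail ξ) (ξ 0)
  rw [norm_tail_one_sq, inner_tail_one, inner_tail_one, sum_esymm_one_sub, norm_tail_sq,
    sum_esymm_one_sub_sq, inner_tail, hlin, norm_tail_sq] at key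
  rw [sum_sum_ite_eq_sq_sum_sub_sum_sq, ge_iff_le]
  set σ₁ := esymm (k + 1) 1 w
  set σ₂ := esymm (k + 1) 2 w
  push_cast at key ⊢
  simp only [add_sub_cancel_right, show (k : ℝ) + 1 - 2 = k - 1 by ring] at key ⊢
  have hD : 0 < k * w 0 ^ 2 + 2 * (k - 1) * σ₂ := by positivity
  rw [show (k * σ₁ - (σ₁ - w 0)) ^ 2 - (k - 1) * (k * σ₁ ^ 2 - 2 * σ₂ - (σ₁ - w 0) ^ 2)
    = k * w 0 ^ 2 + 2 * (k - 1) * σ₂ by ring] at key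
  convert key hD using 1
  · rw [eq_div_iff hD.ne', sub_mul, mul_assoc, div_mul_cancel₀ _ hD.ne']
    field_simp
    ring
  · ring
end
end

section
/- Let n ≥ 3 and let w₁ ≥ w₂ ≥ ... ≥ wₙ be real numbers with w = (w₁, ..., wₙ) ∈ Γ₂. Suppose a > 0 satisfies a ≤ √(σ₂(w)/(3(n−1)(n−2))) and σ₃(w₁ + a, w₂ + a, ..., wₙ + a) ≥ 0, and suppose w₁ > 6(n−2)a. Then (7/6)σ₂(w) ≥ σ₂(w) + ((n−1)(n−2)/2)a² ≥ (5/6)(σ₁(w) − w₁) w₁, and for every j ∈ {2, ..., n}, |wⱼ| ≤ (n−1)² a + 7(n−1)σ₂(w)/(5 w₁). -/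
open scoped BigOperators

noncomputable section

/-!
Split off `w₁` and put `λ = (w₂ + a, …, wₙ + a)`, so that
`σ₃(w + a) = σ₃(λ) + (w₁ + a) σ₂(λ) ≥ 0`. For every real vector, `(∑ xᵢ³)² ≤ (∑ xᵢ²)³` gives the
Newton-type inequality `3 σ₁ σ₃ ≤ 2 σ₂²`; applied to `λ` (whose `σ₁` is positive because `w ∈ Γ₂`)
it shows that `σ₂(λ) < 0` would force `-2 σ₂(λ) ≥ 3 (w₁ + a) σ₁(λ)`, which `σ₂(w) > 0` rules out.
So `σ₂(λ) ≥ 0`. Expanding `σ₂(λ)` in `a` turns this into the lower bound for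
`σ₂(w) + ((n-1)(n-2)/2) a²`, and `σ₂(λ) ≥ 0` also gives `|λⱼ| ≤ σ₁(λ)`; the remaining constants come
from `a² ≤ σ₂(w) / (3(n-1)(n-2))` and `w₁ > 6(n-2)a`.
-/

open Finset

variable {ι R : Type*}

def esymmOn [CommSemiring R] (s : Finset ι) (k : ℕ) (f : ι → R) : R :=
  ∑ t ∈ s.powersetCard k, ∏ i ∈ t, f i

section CommSemiring

variable [CommSemiring R] {s : Finset ι} {f : ι → R}

@[simp]
lemma esymmOn_zero : esymmOn s 0 f = 1 := by
  simp [esymmOn]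

@[simp]
lemma esymmOn_empty_succ (k : ℕ) : esymmOn (∅ : Finset ι) (k + 1) f = 0 := by
  rw [esymmOn, powersetCard_eq_empty.2 k.succ_pos, sum_empty]

lemma esymmOn_one : esymmOn s 1 f = ∑ i ∈ s, f i := by
  simp [esymmOn, powersetCard_one]

lemma esymmOn_insert [DecidableEq ι] {j : ι} (hj : j ∉ s) (k : ℕ) :
    esymmOn (insert j s) (k + 1) f = esymmOn s (k + 1) f + f j * esymmOn s k f := by
  simp only [esymmOn, ← esymm_map_val, insert_val_of_notMem hj, Multiset.map_cons,
    Multiset.esymm, Multiset.powersetCard_cons, Multiset.map_add, Multiset.sum_add,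
    Multiset.map_map, Function.comp_def, Multiset.prod_cons, Multiset.sum_map_mul_left]

end CommSemiring

section CommRing

variable [CommRing R] {s : Finset ι} {f : ι → R}

lemma two_mul_esymmOn_two : 2 * esymmOn s 2 f = (∑ i ∈ s, f i) ^ 2 - ∑ i ∈ s, f i ^ 2 := by
  classical
  induction s using Finset.induction_on with
  | empty => simp
  | insert j s hj ih =>
    rw [esymmOn_insert hj, esymmOn_one, sum_insert hj, sum_insert hj]
    linear_combination ih

lemma six_mul_esymmOn_three :
    6 * esymmOn s 3 f = (∑ i ∈ s, f i) ^ 3 - 3 * (∑ i ∈ s, f i) * ∑ i ∈ s, f i ^ 2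
      + 2 * ∑ i ∈ s, f i ^ 3 := by
  classical
  induction s using Finset.induction_on with
  | empty => simp
  | insert j s hj ih =>
    rw [esymmOn_insert hj, sum_insert hj, sum_insert hj, sum_insert hj]
    linear_combination ih + 3 * f j * two_mul_esymmOn_two (s := s) (f := f)

lemma esymmOn_one_add_const (c : R) :
    esymmOn s 1 (fun i ↦ f i + c) = esymmOn s 1 f + #s * c := by
  simp [esymmOn_one, sum_add_distrib]

lemma two_mul_esymmOn_two_add_const (c : R) :
    2 * esymmOn s 2 (fun i ↦ f i + c)
      = 2 * esymmOn s 2 f + 2 * (#s - 1) * c * esymmOn s 1 f + #s * (#s - 1) * c ^ 2 := by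
  simp only [two_mul_esymmOn_two, esymmOn_one, add_sq, sum_add_distrib, ← sum_mul, ← mul_sum,
    sum_const, nsmul_eq_mul]
  ring

end CommRing

section LinearOrderedCommRing

variable [CommRing R] [LinearOrder R] [IsStrictOrderedRing R] {s : Finset ι} {f : ι → R}

lemma two_mul_esymmOn_two_le_sq : 2 * esymmOn s 2 f ≤ esymmOn s 1 f ^ 2 := by
  rw [two_mul_esymmOn_two, esymmOn_one]
  exact sub_le_self _ (sum_nonneg fun i _ ↦ sq_nonneg (f i))

lemma abs_le_esymmOn_one {j : ι} (hj : j ∈ s) (h1 : 0 ≤ esymmOn s 1 f)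
    (h2 : 0 ≤ esymmOn s 2 f) : |f j| ≤ esymmOn s 1 f := by
  have hsq : f j ^ 2 ≤ ∑ i ∈ s, f i ^ 2 := single_le_sum (fun i _ ↦ sq_nonneg (f i)) hj
  have h12 := two_mul_esymmOn_two (s := s) (f := f)
  rw [← esymmOn_one] at h12
  exact abs_le_of_sq_le_sq (by linarith) h1

lemma esymmOn_one_pos_of_insert [DecidableEq ι] {j : ι} (hj : j ∉ s)
    (h1 : 0 < esymmOn (insert j s) 1 f) (h2 : 0 < esymmOn (insert j s) 2 f) :
    0 < esymmOn s 1 f := by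
  rw [esymmOn_insert hj 0, esymmOn_zero, mul_one] at h1
  rw [esymmOn_insert hj 1] at h2
  have := two_mul_esymmOn_two_le_sq (s := s) (f := f)
  refine pos_of_mul_pos_right (a := esymmOn s 1 f + f j) ?_ h1.le
  nlinarith

lemma sq_sum_pow_three_le : (∑ i ∈ s, f i ^ 3) ^ 2 ≤ (∑ i ∈ s, f i ^ 2) ^ 3 :=
  calc (∑ i ∈ s, f i ^ 3) ^ 2 = (∑ i ∈ s, f i * f i ^ 2) ^ 2 := by simp only [← pow_succ']
    _ ≤ (∑ i ∈ s, f i ^ 2) * ∑ i ∈ s, (f i ^ 2) ^ 2 := sum_mul_sq_le_sq_mul_sq _ _ _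
    _ ≤ (∑ i ∈ s, f i ^ 2) * (∑ i ∈ s, f i ^ 2) ^ 2 :=
      mul_le_mul_of_nonneg_left (sum_sq_le_sq_sum_of_nonneg fun i _ ↦ sq_nonneg (f i))
        (sum_nonneg fun i _ ↦ sq_nonneg (f i))
    _ = (∑ i ∈ s, f i ^ 2) ^ 3 := by ring

lemma three_mul_esymmOn_one_mul_esymmOn_three_le :
    3 * esymmOn s 1 f * esymmOn s 3 f ≤ 2 * esymmOn s 2 f ^ 2 := by
  have h2 := two_mul_esymmOn_two (s := s) (f := f)
  have h3 := six_mul_esymmOn_three (s := s) (f := f)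
  rw [esymmOn_one]
  set p₁ := ∑ i ∈ s, f i
  set p₂ := ∑ i ∈ s, f i ^ 2
  set p₃ := ∑ i ∈ s, f i ^ 3
  have hp₂ : 0 ≤ p₂ := sum_nonneg fun i _ ↦ sq_nonneg (f i)
  have hp₃ : p₃ ^ 2 ≤ p₂ ^ 3 := sq_sum_pow_three_le
  have key : 2 * p₁ * p₃ ≤ p₁ ^ 2 * p₂ + p₂ ^ 2 := by
    rcases hp₂.eq_or_lt with h | h
    · have hp₃ : p₃ = 0 := by
        rw [← h] at hp₃
        exact pow_eq_zero_iff two_ne_zero |>.1 (le_antisymm (by simpa using hp₃) (sq_nonneg _))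
      simp [← h, hp₃]
    · -- `p₂ (p₁² p₂ + p₂² - 2 p₁ p₃) = (p₁ p₂ - p₃)² + (p₂³ - p₃²)`
      refine le_of_mul_le_mul_left ?_ h
      nlinarith [sq_nonneg (p₁ * p₂ - p₃)]
  have e : 12 * (2 * esymmOn s 2 f ^ 2 - 3 * p₁ * esymmOn s 3 f)
      = 6 * (p₁ ^ 2 * p₂ + p₂ ^ 2 - 2 * p₁ * p₃) := by
    linear_combination (6 * (2 * esymmOn s 2 f + (p₁ ^ 2 - p₂))) * h2 - 6 * p₁ * h3
  linarith

/-- Multiplying `σ₃(insert j s) = σ₃(s) + f j σ₂(s) ≥ 0` by `σ₁(s)` and using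
`3 σ₁ σ₃ ≤ 2 σ₂²` gives `σ₂(s) (3 f j σ₁(s) + 2 σ₂(s)) ≥ 0`. -/
lemma esymmOn_two_nonneg_of_esymmOn_three_nonneg [DecidableEq ι] {j : ι} (hj : j ∉ s)
    (h1 : 0 ≤ esymmOn s 1 f) (h3 : 0 ≤ esymmOn (insert j s) 3 f)
    (hlt : -2 * esymmOn s 2 f < 3 * f j * esymmOn s 1 f) : 0 ≤ esymmOn s 2 f := by
  rw [esymmOn_insert hj 2] at h3
  by_contra! h2
  nlinarith [three_mul_esymmOn_one_mul_esymmOn_three_le (s := s) (f := f), mul_nonneg h1 h3]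

lemma esymmOn_two_add_const_nonneg [DecidableEq ι] {j : ι} (hj : j ∉ s) {a : R} (ha : 0 < a)
    (hfj : 0 ≤ f j) (h1 : 0 < esymmOn (insert j s) 1 f) (h2 : 0 < esymmOn (insert j s) 2 f)
    (h3 : 0 ≤ esymmOn (insert j s) 3 (fun i ↦ f i + a)) :
    0 ≤ esymmOn s 2 (fun i ↦ f i + a) := by
  have hA := esymmOn_one_pos_of_insert hj h1 h2
  rw [esymmOn_insert hj 1] at h2
  have hS := esymmOn_one_add_const (s := s) (f := f) a
  have hQ := two_mul_esymmOn_two_add_const (s := s) (f := f) a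
  have hm : (0 : R) ≤ #s := Nat.cast_nonneg _
  refine esymmOn_two_nonneg_of_esymmOn_three_nonneg hj (by rw [hS]; positivity) h3 ?_
  rw [hS]
  nlinarith [mul_pos ha hA, mul_nonneg hm (mul_pos ha ha).le, mul_nonneg hm (mul_nonneg hfj ha.le),
    mul_nonneg hfj hA.le]

lemma five_mul_esymmOn_one_mul_le [DecidableEq ι] {j : ι} (hj : j ∉ s) {a : R}
    (hA : 0 ≤ esymmOn s 1 f) (hQ : 0 ≤ esymmOn s 2 (fun i ↦ f i + a))
    (hgap : 6 * (#s - 1) * a ≤ f j) :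
    5 * esymmOn s 1 f * f j ≤ 6 * esymmOn (insert j s) 2 f + 3 * #s * (#s - 1) * a ^ 2 := by
  rw [esymmOn_insert hj 1]
  have := two_mul_esymmOn_two_add_const (s := s) (f := f) a
  nlinarith [mul_nonneg hA (sub_nonneg.2 hgap)]

lemma abs_le_esymmOn_one_add_mul {j : ι} (hj : j ∈ s) {a : R} (ha : 0 ≤ a)
    (hA : 0 ≤ esymmOn s 1 f) (hQ : 0 ≤ esymmOn s 2 (fun i ↦ f i + a)) :
    |f j| ≤ esymmOn s 1 f + (#s + 1) * a := by
  have hS := esymmOn_one_add_const (s := s) (f := f) a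
  have hm : (0 : R) ≤ #s := Nat.cast_nonneg _
  have h := abs_le_esymmOn_one (f := fun i ↦ f i + a) hj (by rw [hS]; positivity) hQ
  rw [hS, abs_le] at h
  rw [abs_le]
  constructor <;> linarith [h.1, h.2]

end LinearOrderedCommRing

lemma esymm_eq_esymmOn_insert_erase_zero {n : ℕ} [NeZero n] (k : ℕ) (g : Fin n → ℝ) :
    esymm n k g = esymmOn (insert 0 (univ.erase 0)) k g := by
  rw [insert_erase (mem_univ 0)]
  rfl

theorem lemma_guan_qiu_general (n : ℕ) (hn : 3 ≤ n) [NeZero n] (w : Fin n → ℝ) (a : ℝ)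
    (hG : 0 < esymm n 1 w ∧ 0 < esymm n 2 w)
    (ha : 0 < a)
    (ha' : a ≤ Real.sqrt (esymm n 2 w / (3 * ((n:ℝ) - 1) * ((n:ℝ) - 2))))
    (hs3 : 0 ≤ esymm n 3 (fun i => w i + a))
    (hw1 : 6 * ((n:ℝ) - 2) * a < w 0) :
    (7/6 : ℝ) * esymm n 2 w ≥ esymm n 2 w + ((n:ℝ) - 1) * ((n:ℝ) - 2) / 2 * a ^ 2 ∧
    esymm n 2 w + ((n:ℝ) - 1) * ((n:ℝ) - 2) / 2 * a ^ 2 ≥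
      (5/6 : ℝ) * (esymm n 1 w - w 0) * w 0 ∧
    ∀ j : Fin n, j ≠ 0 →
      |w j| ≤ ((n:ℝ) - 1) ^ 2 * a + 7 * ((n:ℝ) - 1) * esymm n 2 w / (5 * w 0) := by
  obtain ⟨hσ₁, hσ₂⟩ := hG
  have hn3 : (3 : ℝ) ≤ n := by exact_mod_cast hn
  have hw0 : 0 < w 0 := by nlinarith
  have ha2 : 3 * ((n:ℝ) - 1) * ((n:ℝ) - 2) * a ^ 2 ≤ esymm n 2 w := by
    rw [← le_div_iff₀' (by nlinarith), ← Real.le_sqrt' ha]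
    exact ha'
  simp only [esymm_eq_esymmOn_insert_erase_zero] at hσ₁ hσ₂ hs3 ha2 ⊢
  set t := univ.erase (0 : Fin n)
  have h0t : (0 : Fin n) ∉ t := notMem_erase 0 univ
  have hcard : (#t : ℝ) = n - 1 := by simp [t, Nat.cast_pred (NeZero.pos n)]
  have hσ₁t_pos := esymmOn_one_pos_of_insert h0t hσ₁ hσ₂
  have hσ₂_shift := esymmOn_two_add_const_nonneg h0t ha hw0.le hσ₁ hσ₂ hs3
  have hσ₁_sub : esymmOn (insert 0 t) 1 w - w 0 = esymmOn t 1 w := by simp [esymmOn_insert h0t 0]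
  have hlower := five_mul_esymmOn_one_mul_le h0t hσ₁t_pos.le hσ₂_shift (by rw [hcard]; linarith)
  rw [hcard] at hlower
  refine ⟨by linarith, by rw [hσ₁_sub]; linarith, fun j hj ↦ ?_⟩
  have hwj := abs_le_esymmOn_one_add_mul (mem_erase.2 ⟨hj, mem_univ j⟩) ha.le hσ₁t_pos.le hσ₂_shift
  have hσ₁t_le : esymmOn t 1 w ≤ 7 * ((n:ℝ) - 1) * esymmOn (insert 0 t) 2 w / (5 * w 0) := by
    rw [le_div_iff₀ (by positivity)]
    nlinarith
  have hna : (n:ℝ) * a ≤ ((n:ℝ) - 1) ^ 2 * a := by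
    nlinarith [mul_nonneg (mul_nonneg (sub_nonneg.2 hn3) (by positivity : (0:ℝ) ≤ n)) ha.le]
  rw [hcard, sub_add_cancel] at hwj
  linarith

/-- Lemma of Guan–Qiu: if `w ∈ Γ₂` is sorted decreasingly, `0 < a ≤ √(σ₂/(3(n-1)(n-2)))`,
`σ₃(w + a𝟙) ≥ 0` and `w₁ > 6(n-2)a`, then
`(7/6)σ₂ ≥ σ₂ + ((n-1)(n-2)/2)a² ≥ (5/6)σ₂^{11}w₁` and
`|wⱼ| ≤ (n-1)²a + 7(n-1)σ₂/(5w₁)` for `j ≥ 2`.  (Here `σ₂^{11} = σ₁(w) - w₁`.) -/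
theorem lemma_guan_qiu (n : ℕ) (hn : 3 ≤ n) [NeZero n] (w : Fin n → ℝ) (a : ℝ)
    (hsort : ∀ i j : Fin n, i ≤ j → w j ≤ w i)
    (hG : 0 < esymm n 1 w ∧ 0 < esymm n 2 w)
    (ha : 0 < a)
    (ha' : a ≤ Real.sqrt (esymm n 2 w / (3 * ((n:ℝ) - 1) * ((n:ℝ) - 2))))
    (hs3 : 0 ≤ esymm n 3 (fun i => w i + a))
    (hw1 : 6 * ((n:ℝ) - 2) * a < w 0) :
    (7/6 : ℝ) * esymm n 2 w ≥ esymm n 2 w + ((n:ℝ) - 1) * ((n:ℝ) - 2) / 2 * a ^ 2 ∧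
    esymm n 2 w + ((n:ℝ) - 1) * ((n:ℝ) - 2) / 2 * a ^ 2 ≥
      (5/6 : ℝ) * (esymm n 1 w - w 0) * w 0 ∧
    ∀ j : Fin n, j ≠ 0 →
      |w j| ≤ ((n:ℝ) - 1) ^ 2 * a + 7 * ((n:ℝ) - 1) * esymm n 2 w / (5 * w 0) :=
  lemma_guan_qiu_general n hn w a hG ha ha' hs3 hw1
end
end

section
/- Let λ₁, λ₂, λ₃ be real numbers satisfying λ₁λ₂ + λ₂λ₃ + λ₃λ₁ = 1 and σ₁ := λ₁ + λ₂ + λ₃ > 0, and set ε = 1/25. Then for all real numbers s, t: [2σ₁(σ₁ + λ₃) − (1+ε)(λ₁ − λ₂)²] s² + 2[2σ₁λ₁ − (1+ε)(λ₂ − λ₁)(λ₃ − λ₁)] s t + [2σ₁(σ₁ + λ₂) − (1+ε)(λ₁ − λ₃)²] t² ≥ 0; equivalently, the two diagonal coefficients are nonnegative and [2σ₁(σ₁ + λ₃) − (1+ε)(λ₁ − λ₂)²] · [2σ₁(σ₁ + λ₂) − (1+ε)(λ₁ − λ₃)²] ≥ [2σ₁λ₁ − (1+ε)(λ₂ − λ₁)(λ₃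 − λ₁)]². -/
/-!
With `σ₁ = λ₁ + λ₂ + λ₃`, `L = (λ₁ - λ₂) s + (λ₁ - λ₃) t` and
`P = (σ₁ + λ₃) s² + 2 λ₁ s t + (σ₁ + λ₂) t²`, the form is `2 σ₁ P - (1 + ε) L²`.
On the closed cone `σ₁ ≥ 0, σ₂ ≥ 0` one has `2 L² ≤ 3 σ₁ P` (equality at `λ = (-1, 2, 2)`, `s = t`),
and `1 + ε ≤ 4/3`. The bound `2 L² ≤ 3 σ₁ P` is the 2 × 2 positivity criterion for `3 σ₁ P - 2 L²`,
whose diagonal coefficients and determinant factor into manifestly nonnegative terms on the cone.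
-/

section

variable {K : Type*} [Field K] [LinearOrder K] [IsStrictOrderedRing K]

theorem quadratic_form_nonneg {a b c : K} (ha : 0 ≤ a) (hc : 0 ≤ c) (hdet : b ^ 2 ≤ a * c)
    (x y : K) : 0 ≤ a * x ^ 2 + 2 * b * x * y + c * y ^ 2 := by
  rcases ha.eq_or_lt with rfl | ha
  · obtain rfl : b = 0 := by nlinarith
    nlinarith
  · refine nonneg_of_mul_nonneg_right ?_ ha
    have hdet' := sub_nonneg.2 hdet
    calc 0 ≤ (a * x + b * y) ^ 2 + (a * c - b ^ 2) * y ^ 2 := by positivity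
      _ = a * (a * x ^ 2 + 2 * b * x * y + c * y ^ 2) := by ring

theorem add_nonneg_of_sigma_nonneg {l₁ l₂ l₃ : K} (h1 : 0 ≤ l₁ + l₂ + l₃)
    (h2 : 0 ≤ l₁ * l₂ + l₂ * l₃ + l₃ * l₁) : 0 ≤ l₂ + l₃ := by
  nlinarith [sq_nonneg l₂, sq_nonneg l₃]

theorem two_mul_sq_le_of_sigma_nonneg {l₁ l₂ l₃ : K} (h1 : 0 ≤ l₁ + l₂ + l₃)
    (h2 : 0 ≤ l₁ * l₂ + l₂ * l₃ + l₃ * l₁) (s t : K) :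
    2 * ((l₁ - l₂) * s + (l₁ - l₃) * t) ^ 2 ≤
      3 * (l₁ + l₂ + l₃) *
        ((l₁ + l₂ + l₃ + l₃) * s ^ 2 + 2 * l₁ * s * t + (l₁ + l₂ + l₃ + l₂) * t ^ 2) := by
  set σ₁ := l₁ + l₂ + l₃
  set σ₂ := l₁ * l₂ + l₂ * l₃ + l₃ * l₁
  set a := 3 * σ₁ * (σ₁ + l₃) - 2 * (l₁ - l₂) ^ 2
  set b := 3 * σ₁ * l₁ - 2 * (l₁ - l₂) * (l₁ - l₃)
  set c := 3 * σ₁ * (σ₁ + l₂) - 2 * (l₁ - l₃) ^ 2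
  have ha : 0 ≤ a := by
    have : a = (l₁ + l₂ + l₃ / 2) ^ 2 + 23 / 4 * l₃ ^ 2 + 8 * σ₂ := by ring
    rw [this]; positivity
  have hc : 0 ≤ c := by
    have : c = (l₁ + l₃ + l₂ / 2) ^ 2 + 23 / 4 * l₂ ^ 2 + 8 * σ₂ := by ring
    rw [this]; positivity
  have hdet : b ^ 2 ≤ a * c := by
    have hdet_eq : a * c - b ^ 2
        = 3 * σ₁ * (2 * (l₂ + l₃) * (l₂ - l₃) ^ 2 + σ₂ * (3 * σ₁ + 18 * (l₂ + l₃))) := by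
      ring
    have := add_nonneg_of_sigma_nonneg h1 h2
    rw [← sub_nonneg, hdet_eq]
    positivity
  have := quadratic_form_nonneg ha hc hdet s t
  linarith

end

/-- The key algebraic inequality with ε = 1/25: if `λ₁λ₂ + λ₂λ₃ + λ₃λ₁ = 1` and
`σ₁ = λ₁ + λ₂ + λ₃ > 0`, then the quadratic form
`[2σ₁(σ₁+λ₃) - (1+ε)(λ₁-λ₂)²]s² + 2[2σ₁λ₁ - (1+ε)(λ₂-λ₁)(λ₃-λ₁)]st
  + [2σ₁(σ₁+λ₂) - (1+ε)(λ₁-λ₃)²]t²`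
is nonnegative; equivalently its diagonal coefficients are nonnegative and the product
of the diagonal coefficients dominates the square of the mixed coefficient. -/
theorem key_quadratic_form_inequality (l₁ l₂ l₃ ε : ℝ) (hε : ε = 1/25)
    (h2 : l₁ * l₂ + l₂ * l₃ + l₃ * l₁ = 1) (h1 : 0 < l₁ + l₂ + l₃) :
    (∀ s t : ℝ,
      (2 * (l₁ + l₂ + l₃) * ((l₁ + l₂ + l₃) + l₃) - (1 + ε) * (l₁ - l₂) ^ 2) * s ^ 2 +
        2 * (2 * (l₁ + l₂ + l₃) * l₁ - (1 + ε) * (l₂ - l₁) * (l₃ - l₁)) * s * t +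
        (2 * (l₁ + l₂ + l₃) * ((l₁ + l₂ + l₃) + l₂) - (1 + ε) * (l₁ - l₃) ^ 2) * t ^ 2 ≥ 0) ∧
    0 ≤ 2 * (l₁ + l₂ + l₃) * ((l₁ + l₂ + l₃) + l₃) - (1 + ε) * (l₁ - l₂) ^ 2 ∧
    0 ≤ 2 * (l₁ + l₂ + l₃) * ((l₁ + l₂ + l₃) + l₂) - (1 + ε) * (l₁ - l₃) ^ 2 ∧
    (2 * (l₁ + l₂ + l₃) * ((l₁ + l₂ + l₃) + l₃) - (1 + ε) * (l₁ - l₂) ^ 2) *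
        (2 * (l₁ + l₂ + l₃) * ((l₁ + l₂ + l₃) + l₂) - (1 + ε) * (l₁ - l₃) ^ 2) ≥
      (2 * (l₁ + l₂ + l₃) * l₁ - (1 + ε) * (l₂ - l₁) * (l₃ - l₁)) ^ 2 := by
  subst hε
  set A := 2 * (l₁ + l₂ + l₃) * ((l₁ + l₂ + l₃) + l₃) - (1 + 1 / 25) * (l₁ - l₂) ^ 2 with hA_def
  set B := 2 * (l₁ + l₂ + l₃) * l₁ - (1 + 1 / 25) * (l₂ - l₁) * (l₃ - l₁) with hB_def
  set C := 2 * (l₁ + l₂ + l₃) * ((l₁ + l₂ + l₃) + l₂) - (1 + 1 / 25) * (l₁ - l₃) ^ 2 with hC_def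
  have hform (s t : ℝ) : A * s ^ 2 + 2 * B * s * t + C * t ^ 2 ≥ 0 := by
    have hL := two_mul_sq_le_of_sigma_nonneg h1.le (h2 ▸ zero_le_one) s t
    rw [hA_def, hB_def, hC_def]
    linear_combination (2 / 3) * hL + (22 / 75) * sq_nonneg ((l₁ - l₂) * s + (l₁ - l₃) * t)
  have hA : 0 ≤ A := by simpa using hform 1 0
  have hC : 0 ≤ C := by simpa using hform 0 1
  have hdisc : discrim A (2 * B) C ≤ 0 :=
    discrim_le_zero fun x => by linarith [hform x 1]
  refine ⟨hform, hA, hC, ?_⟩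
  rw [discrim] at hdisc
  linarith
end
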